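/- Let ν₁ < 0, c > 0, 0 < s < 1 and m > (1+s)/(1−s). If P, M, I satisfy −cM + ν₁P + (ν₂/m)I = 0 and cM + ν₁(s−1)P − (2ν₂/(m(m+1)))I = 0 with M > 0 and P ≥ 0, then P < 0, a contradiction; hence P, M cannot both be nonnegative with M > 0. -/
import Mathlib


/-- Nonexistence of solitary waves in the regime `ν₁ < 0`,
`c > 0`, `m > (1+s)/(1−s)`: the Pohozaev relations force
`P = ‖(−Δ)^{s/2}φ‖² < 0`, so `P` and `M` cannot both be nonnegative with
`M > 0`. -/
theorem nonexistence_solitary_wave (s m c ν₁ ν₂ P M I : ℝ)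
    (hs : 0 < s) (hs1 : s < 1) (hν₁ : ν₁ < 0) (hc : 0 < c)
    (hm : (1 + s) / (1 - s) < m) (hM : 0 < M)
    (h1 : -c * M + ν₁ * P + ν₂ / m * I = 0)
    (h2 : c * M + ν₁ * (s - 1) * P - 2 * ν₂ / (m * (m + 1)) * I = 0) :
    P < 0 := by
  have h1s : 0 < 1 - s := by linarith
  have hm1 : 1 < m := by
    have : (1 : ℝ) < (1 + s) / (1 - s) := by
      rw [lt_div_iff₀ h1s]; linarith
    linarith
  have hms : 1 + s < (1 - s) * m := by
    rwa [div_lt_iff₀ h1s, mul_comm] at hm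
  have hm0 : m ≠ 0 := by linarith
  have hm10 : m + 1 ≠ 0 := by linarith
  -- eliminate I
  have hI : ν₂ * I = m * (c * M - ν₁ * P) := by
    field_simp at h1
    linarith
  have h2' : c * M * (m * (m + 1)) + ν₁ * (s - 1) * P * (m * (m + 1))
      - 2 * (ν₂ * I) = 0 := by
    field_simp at h2
    linarith
  rw [hI] at h2'
  -- key: ν₁ * P * ((m+1)*(s-1) + 2) = -(m-1)*c*M
  have hkey : ν₁ * P * ((m + 1) * (s - 1) + 2) = -((m - 1) * (c * M)) := by
    have := h2'
    nlinarith [this, sq_nonneg m]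
  have hcoef : (m + 1) * (s - 1) + 2 < 0 := by nlinarith
  have hpos : 0 < ν₁ * ((m + 1) * (s - 1) + 2) := mul_pos_of_neg_of_neg hν₁ hcoef
  have hrhs : ν₁ * ((m + 1) * (s - 1) + 2) * P < 0 := by
    have : -((m - 1) * (c * M)) < 0 := by
      have := mul_pos (show (0:ℝ) < m - 1 by linarith) (mul_pos hc hM)
      linarith
    nlinarith [hkey]
  by_contra h
  push_neg at h
  nlinarith [mul_nonneg (le_of_lt hpos) h]
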